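/- Let d be an odd prime, ε = 2π/d. For q ∈ {0,...,d-1}, m ∈ {0,...,d-1}, τ = ±1, define the vector |Ψ^{(q)}_{m,τ}⟩ = (1/√d)·∑_{j=0}^{d-1} e^{iχ^{(q)}_{m,τ,j}} |jq mod d⟩ ⊗ |τ⟩ in ℂ^d ⊗ ℂ², where χ^{(q)}_{m,τ,j} = -τ(qε/2)j² + (mε + qπ)j and |k⟩ = (1/√d)∑_x e^{ikεx}|x⟩. Then for q ≠ q' both nonzero, |⟨Ψ^{(q)}_{m,τ}|Ψ^{(q')}_{m',τ'}⟩|² = δ_{τ,τ'}·(1/d). -/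

import Mathlib

/-!
Write `ψ = ZMod.stdAddChar`, `ψ(k) = exp(2πik/d)`. Since `d` is odd, the phase
`χ^{(q)}_{m,τ,j}` is `2π/d` times an integer, and modulo `d` that integer is `-τ q j²/2 + m j`;
so `Ψ^{(q)}_{m,τ}(x, τ) = d⁻¹ ∑_j ψ(-τ q j²/2 + m j) ψ(q j x)` with `j, x ∈ ZMod d`. Summing
over `x` by character orthogonality pairs `j` with `j' = q j / q'`, which leaves `d⁻¹` times the
quadratic exponential sum `∑_j ψ(c j² + b j)` with `c = τ q (q' - q) / (2 q') ≠ 0`. The usual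
shift-and-difference trick shows that such a sum has absolute value `√d`.
-/

open Real

/-- The quantum-walk eigenvector (trivial coin `θ = 0`)
`|Ψ^{(q)}_{m,τ}⟩ = (1/√d) ∑_j e^{iχ^{(q)}_{m,τ,j}} |jq mod d⟩ ⊗ |τ⟩` in `ℂ^d ⊗ ℂ²`,
where `χ^{(q)}_{m,τ,j} = -τ(qε/2)j² + (mε+qπ)j`, `ε = 2π/d`,
`|k⟩ = (1/√d) ∑_x e^{ikεx}|x⟩`, and the coin index `s : Fin 2` encodes `τ = +1` (`s = 0`)
or `τ = -1` (`s = 1`). -/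
noncomputable def qwPsi (d q m : ℕ) (s : Fin 2) : EuclideanSpace ℂ (Fin d × Fin 2) :=
  WithLp.toLp 2 fun p =>
    (if p.2 = s then (1 : ℂ) else 0) * (1 / Real.sqrt d : ℝ) *
      ∑ j ∈ Finset.range d,
        Complex.exp (Complex.I *
            ((-(if s = 0 then (1 : ℝ) else -1) * ((q : ℝ) * (2 * Real.pi / d) / 2) * (j : ℝ) ^ 2
              + ((m : ℝ) * (2 * Real.pi / d) + (q : ℝ) * Real.pi) * (j : ℝ)))) *
          ((1 / Real.sqrt d : ℝ) *
            Complex.exp (Complex.I * (((j * q) % d : ℕ) : ℝ) * (2 * Real.pi / d) * ((p.1 : ℕ) : ℝ)))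

open Finset
open scoped ComplexConjugate

namespace AddChar

theorem sum_quadratic_mul_conj {R : Type*} [CommRing R] [Fintype R] {ψ : AddChar R ℂ}
    (hψ : ψ.IsPrimitive) {a : R} (ha : IsUnit (2 * a)) (b : R) :
    (∑ x, ψ (a * x ^ 2 + b * x)) * conj (∑ x, ψ (a * x ^ 2 + b * x)) = Fintype.card R := by
  classical
  calc (∑ x, ψ (a * x ^ 2 + b * x)) * conj (∑ x, ψ (a * x ^ 2 + b * x))
      = ∑ y, ∑ x, ψ (a * x ^ 2 + b * x - (a * y ^ 2 + b * y)) := by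
        simp only [map_sum, sum_mul_sum, sub_eq_add_neg, map_add_eq_mul, map_neg_eq_conj]
        exact sum_comm
    _ = ∑ y, ∑ t, ψ (a * t ^ 2 + b * t) * ψ (y * (2 * a * t)) := by
        refine sum_congr rfl fun y _ => ?_
        rw [← Equiv.sum_comp (Equiv.addLeft y)]
        refine sum_congr rfl fun t _ => ?_
        rw [← map_add_eq_mul, Equiv.coe_addLeft]
        ring_nf
    _ = ∑ t, ψ (a * t ^ 2 + b * t) * ∑ y, ψ (y * (2 * a * t)) := by
        rw [sum_comm]
        simp only [mul_sum]
    _ = Fintype.card R := by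
        simp [sum_mulShift _ hψ, ha.mul_right_eq_zero]

theorem norm_sum_quadratic_sq {R : Type*} [CommRing R] [Fintype R] {ψ : AddChar R ℂ}
    (hψ : ψ.IsPrimitive) {a : R} (ha : IsUnit (2 * a)) (b : R) :
    ‖∑ x, ψ (a * x ^ 2 + b * x)‖ ^ 2 = Fintype.card R := by
  have h := sum_quadratic_mul_conj hψ ha b
  rw [Complex.mul_conj, ← Complex.sq_norm] at h
  exact_mod_cast h

theorem sum_conj_mul_sum_dilate {F : Type*} [Field F] [Fintype F] {ψ : AddChar F ℂ}
    (hψ : ψ.IsPrimitive) (f g : F → ℂ) (q : F) {q' : F} (hq' : q' ≠ 0) :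
    ∑ x, conj (∑ j, f j * ψ (q * j * x)) * ∑ j, g j * ψ (q' * j * x)
      = Fintype.card F * ∑ j, conj (f j) * g (q * j / q') := by
  classical
  have hsolve (j j' : F) : q' * j' - q * j = 0 ↔ j' = q * j / q' := by
    rw [sub_eq_zero, eq_div_iff hq', mul_comm]
  calc ∑ x, conj (∑ j, f j * ψ (q * j * x)) * ∑ j, g j * ψ (q' * j * x)
      = ∑ x, ∑ j, ∑ j', conj (f j) * g j' * ψ (x * (q' * j' - q * j)) := by
        refine sum_congr rfl fun x _ => ?_
        rw [map_sum, sum_mul_sum]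
        refine sum_congr rfl fun j _ => sum_congr rfl fun j' _ => ?_
        rw [map_mul, ← map_neg_eq_conj, mul_sub, sub_eq_add_neg, map_add_eq_mul, mul_comm x,
          mul_comm x]
        ring
    _ = ∑ j, ∑ j', conj (f j) * g j' * ∑ x, ψ (x * (q' * j' - q * j)) := by
        simp only [mul_sum]
        rw [sum_comm]
        exact sum_congr rfl fun j _ => sum_comm
    _ = Fintype.card F * ∑ j, conj (f j) * g (q * j / q') := by
        simp [sum_mulShift _ hψ, hsolve, mul_sum, mul_comm]

end AddChar

namespace ZMod

theorem sum_fin_natCast {M : Type*} [AddCommMonoid M] (d : ℕ) [NeZero d] (f : ZMod d → M) :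
    ∑ i : Fin d, f (i : ℕ) = ∑ x : ZMod d, f x := by
  refine Fintype.sum_bijective _
    ((Fintype.bijective_iff_injective_and_card _).mpr ⟨?_, by simp⟩) _ _ fun _ => rfl
  intro i i' h
  simpa [val_cast_of_lt i.isLt, val_cast_of_lt i'.isLt, Fin.val_inj] using congrArg val h

theorem sum_range_natCast {M : Type*} [AddCommMonoid M] (d : ℕ) [NeZero d] (f : ZMod d → M) :
    ∑ j ∈ range d, f j = ∑ x : ZMod d, f x := by
  rw [sum_range, sum_fin_natCast]

theorem two_mul_inv_two {d : ℕ} (hd : Odd d) : (2 : ZMod d) * 2⁻¹ = 1 := by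
  exact_mod_cast coe_mul_inv_eq_one 2 (Nat.coprime_two_left.mpr hd)

theorem exp_fourier_eq_stdAddChar {d : ℕ} [NeZero d] (k x : ℕ) :
    Complex.exp (Complex.I * k * (2 * π / d) * x) = stdAddChar ((k * x : ℕ) : ZMod d) := by
  rw [← Int.cast_natCast (R := ZMod d), stdAddChar_coe]
  congr 1
  push_cast
  ring

end ZMod

theorem Int.even_mul_sub_mul_self {d τ : ℤ} (hd : Odd d) (hτ : Odd τ) (j : ℤ) :
    Even (j * (d - τ * j)) := by
  rcases Int.even_or_odd j with h | h
  · exact h.mul_right _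
  · exact (hd.sub_odd (hτ.mul h)).mul_left _

def coinSign (s : Fin 2) : ℤ := if s = 0 then 1 else -1

theorem odd_coinSign (s : Fin 2) : Odd (coinSign s) := by
  unfold coinSign; split_ifs <;> decide

theorem coinSign_cast_ne_zero {R : Type*} [Ring R] [Nontrivial R] (s : Fin 2) :
    (coinSign s : R) ≠ 0 := by
  unfold coinSign; split_ifs <;> simp

/-- `d / 2π` times the phase `χ^{(q)}_{m,τ,j}`, which for odd `d` is an integer modulo `d`. -/
def qwPhase (d q m : ℕ) (τ : ℤ) (j : ZMod d) : ZMod d := -τ * 2⁻¹ * q * j ^ 2 + m * j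

noncomputable def qwAmp (d q m : ℕ) [NeZero d] (τ : ℤ) (x : ZMod d) : ℂ :=
  ∑ j, ZMod.stdAddChar (qwPhase d q m τ j) * ZMod.stdAddChar ((q : ZMod d) * j * x)

theorem exp_chirp_eq_stdAddChar {d : ℕ} [NeZero d] (hd : Odd d) {τ : ℤ} (hτ : Odd τ)
    (q m j : ℕ) :
    Complex.exp (Complex.I * (-(τ : ℂ) * ((q : ℂ) * (2 * π / d) / 2) * (j : ℂ) ^ 2
      + ((m : ℂ) * (2 * π / d) + q * π) * j)) = ZMod.stdAddChar (qwPhase d q m τ j) := by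
  obtain ⟨r, hr⟩ := Int.even_mul_sub_mul_self (d := d) (by exact_mod_cast hd) hτ j
  have hd0 : (d : ℂ) ≠ 0 := NeZero.ne _
  have hrC : (j : ℂ) * (d - τ * j) = 2 * r := by rw [two_mul]; exact_mod_cast hr
  have hrZ : (j : ZMod d) * (0 - τ * j) = 2 * r := by
    have := congrArg (Int.cast : ℤ → ZMod d) hr
    push_cast [ZMod.natCast_self] at this
    rw [this, two_mul]
  rw [qwPhase,
    show (-(τ : ZMod d) * 2⁻¹ * q * j ^ 2 + m * j) = ((q * r + m * j : ℤ) : ZMod d) by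
    push_cast
    linear_combination ((q : ZMod d) * 2⁻¹) * hrZ + (q * r : ZMod d) * ZMod.two_mul_inv_two hd,
    ZMod.stdAddChar_coe]
  congr 1
  push_cast
  rw [eq_div_iff hd0]
  linear_combination (Complex.I * π * q) * hrC
    + (Complex.I * π * j * (2 * m - τ * q * j)) * mul_inv_cancel₀ hd0

theorem qwPsi_apply {d : ℕ} [NeZero d] (hd : Odd d) (q m : ℕ) (s : Fin 2) (p : Fin d × Fin 2) :
    qwPsi d q m s p =
      if p.2 = s then (d : ℂ)⁻¹ * qwAmp d q m (coinSign s) (p.1 : ℕ) else 0 := by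
  rw [qwPsi, PiLp.toLp_apply]
  by_cases hp : p.2 = s
  · rw [if_pos hp, if_pos hp, qwAmp, ← ZMod.sum_range_natCast, mul_sum, mul_sum]
    refine sum_congr rfl fun j _ => ?_
    rw [← exp_chirp_eq_stdAddChar hd (odd_coinSign s)]
    have hτ : ((if s = 0 then (1 : ℝ) else -1 : ℝ) : ℂ) = (coinSign s : ℂ) := by
      unfold coinSign; split_ifs <;> simp
    have hsqrt : 1 / (√(d : ℝ) : ℂ) * (1 / (√(d : ℝ) : ℂ)) = (d : ℂ)⁻¹ := by
      rw [div_mul_div_comm, one_mul, ← Complex.ofReal_mul, Real.mul_self_sqrt (Nat.cast_nonneg d),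
        Complex.ofReal_natCast, one_div]
    rw [hτ]
    push_cast
    rw [ZMod.exp_fourier_eq_stdAddChar, show ((j * q % d * p.1 : ℕ) : ZMod d) = q * j * p.1 by
      push_cast [ZMod.natCast_mod]; ring, ← hsqrt]
    ring
  · simp [hp]

theorem inner_qwPsi {d : ℕ} [NeZero d] (hd : Odd d) (q q' m m' : ℕ) (s s' : Fin 2) :
    inner ℂ (qwPsi d q m s) (qwPsi d q' m' s') = if s = s' then
      ((d : ℂ) ^ 2)⁻¹ * ∑ x, conj (qwAmp d q m (coinSign s) x) * qwAmp d q' m' (coinSign s) x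
      else 0 := by
  rw [PiLp.inner_apply, Fintype.sum_prod_type]
  simp only [RCLike.inner_apply, qwPsi_apply hd, apply_ite (starRingEnd ℂ), map_zero, mul_ite,
    ite_mul, zero_mul, mul_zero, sum_ite_eq', mem_univ, if_true]
  split_ifs with h
  · subst h
    rw [mul_sum, ← ZMod.sum_fin_natCast]
    refine sum_congr rfl fun x _ => ?_
    simp only [map_mul, map_inv₀, map_natCast]
    ring
  · simp

theorem norm_sum_conj_qwAmp_mul_sq {d : ℕ} [Fact d.Prime] (hd : Odd d) {q q' : ℕ}
    (hq : (q : ZMod d) ≠ 0) (hq' : (q' : ZMod d) ≠ 0) (hne : (q : ZMod d) ≠ q') (m m' : ℕ)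
    {τ : ℤ} (hτ : (τ : ZMod d) ≠ 0) :
    ‖∑ x, conj (qwAmp d q m τ x) * qwAmp d q' m' τ x‖ ^ 2 = (d : ℝ) ^ 3 := by
  simp only [qwAmp]
  rw [AddChar.sum_conj_mul_sum_dilate (ZMod.isPrimitive_stdAddChar d) _ _ _ hq', ZMod.card]
  have hphase (j : ZMod d) : conj (ZMod.stdAddChar (qwPhase d q m τ j)) *
      ZMod.stdAddChar (qwPhase d q' m' τ ((q : ZMod d) * j / q')) = ZMod.stdAddChar
        ((τ : ZMod d) * 2⁻¹ * (q : ZMod d) * ((q' : ZMod d) - (q : ZMod d)) / (q' : ZMod d)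
          * j ^ 2 + ((m' : ZMod d) * (q : ZMod d) / (q' : ZMod d) - (m : ZMod d)) * j) := by
    rw [← AddChar.map_neg_eq_conj, ← AddChar.map_add_eq_mul, qwPhase, qwPhase]
    congr 1
    field_simp
    ring
  have h2 : (2 : ZMod d) ≠ 0 := left_ne_zero_of_mul_eq_one (ZMod.two_mul_inv_two hd)
  simp only [hphase]
  rw [norm_mul, mul_pow, AddChar.norm_sum_quadratic_sq (ZMod.isPrimitive_stdAddChar d), ZMod.card]
  · rw [RCLike.norm_natCast]
    ring
  · exact isUnit_iff_ne_zero.mpr <| by simp [h2, hτ, hq, hq', sub_ne_zero.mpr hne.symm]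

theorem qwPsi_overlap_general (d : ℕ) (hd : d.Prime) (hodd : Odd d)
    (q q' m m' : ℕ) (hq : q < d) (hq' : q' < d)
    (hq0 : q ≠ 0) (hq'0 : q' ≠ 0) (hne : q ≠ q') (s s' : Fin 2) :
    ‖(inner ℂ (qwPsi d q m s) (qwPsi d q' m' s') : ℂ)‖ ^ 2
      = if s = s' then 1 / (d : ℝ) else 0 := by
  have : Fact d.Prime := ⟨hd⟩
  have hcast {a b : ℕ} (ha : a < d) (hb : b < d) (h : (a : ZMod d) = b) : a = b := by
    rwa [ZMod.natCast_eq_natCast_iff', Nat.mod_eq_of_lt ha, Nat.mod_eq_of_lt hb] at h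
  have hcast_ne_zero {a : ℕ} (ha : a < d) (ha0 : a ≠ 0) : (a : ZMod d) ≠ 0 := fun h =>
    ha0 (hcast ha hd.pos (by rwa [Nat.cast_zero]))
  rw [inner_qwPsi hodd]
  split_ifs
  · rw [norm_mul, mul_pow, norm_sum_conj_qwAmp_mul_sq hodd (hcast_ne_zero hq hq0)
      (hcast_ne_zero hq' hq'0) (fun h => hne (hcast hq hq' h)) m m' (coinSign_cast_ne_zero s)]
    rw [norm_inv, norm_pow, RCLike.norm_natCast]
    field_simp
  · simp

theorem qwPsi_overlap (d : ℕ) (hd : d.Prime) (hodd : Odd d)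
    (q q' m m' : ℕ) (hq : q < d) (hq' : q' < d) (hm : m < d) (hm' : m' < d)
    (hq0 : q ≠ 0) (hq'0 : q' ≠ 0) (hne : q ≠ q') (s s' : Fin 2) :
    ‖(inner ℂ (qwPsi d q m s) (qwPsi d q' m' s') : ℂ)‖ ^ 2
      = if s = s' then 1 / (d : ℝ) else 0 :=
  qwPsi_overlap_general d hd hodd q q' m m' hq hq' hq0 hq'0 hne s s'
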